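/- For every integer N ≥ 2, the set 𝒜_N has exactly F_{N+1} elements, where F_n denotes the n-th Fibonacci number (F_1 = F_2 = 1 and F_{n+2} = F_{n+1} + F_n). -/

import Mathlib

/-!
The two clauses of `Admissible` at consecutive positions say together `t_j = a ↔ t_{j+1} = c`,
and the last letter is not `a`. Hence an admissible word of length `n + 2` is either an
admissible word of length `n + 1` followed by `b`, or an admissible word of length `n`
followed by `ac`, so the counts satisfy the Fibonacci recurrence, starting from `1` and `2`.
-/

/-- Labels `a`, `b`, `c` for the sequences in the collection `𝒜_N`. -/
inductive Label where
  | a : Label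
  | b : Label
  | c : Label
deriving DecidableEq

instance instFintypeLabel : Fintype Label :=
  ⟨{Label.a, Label.b, Label.c}, fun x => by cases x <;> simp⟩

/-- A sequence `t = (t_1, …, t_n)` (indexed here by `Fin n`, index `i` standing for
`j = i + 1`) is admissible iff the last label is not `a` and, for `2 ≤ j ≤ N-1`:
if `t_j = c` then `t_{j-1} = a`, while if `t_j ∈ {a, b}` then `t_{j-1} ∈ {b, c}`.
Here `n = N - 1`. -/
def Admissible {n : ℕ} (t : Fin n → Label) : Prop :=
  (∀ h : 0 < n, t ⟨n - 1, by omega⟩ ≠ Label.a) ∧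
  ∀ j : ℕ, ∀ h : j + 1 < n,
    (t ⟨j + 1, h⟩ = Label.c → t ⟨j, by omega⟩ = Label.a) ∧
    (t ⟨j + 1, h⟩ ≠ Label.c → t ⟨j, by omega⟩ ≠ Label.a)

/-- The collection `𝒜_N` (with `n = N - 1` labels per sequence). -/
noncomputable def AdmSet (n : ℕ) : Finset (Fin n → Label) :=
  haveI := Classical.decPred (Admissible (n := n))
  Finset.univ.filter Admissible

def IsLinked {n : ℕ} (t : Fin n → Label) : Prop :=
  ∀ j : ℕ, ∀ h : j + 1 < n, (t ⟨j, by omega⟩ = Label.a ↔ t ⟨j + 1, h⟩ = Label.c)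

lemma admissible_iff {n : ℕ} (t : Fin n → Label) :
    Admissible t ↔ (∀ h : 0 < n, t ⟨n - 1, by omega⟩ ≠ Label.a) ∧ IsLinked t := by
  refine and_congr_right fun _ => forall₂_congr fun j h => ?_
  tauto

lemma Fin.snoc_mk {n : ℕ} {α : Type*} (t : Fin n → α) (x : α) (j : ℕ) (h : j < n + 1) :
    Fin.snoc (α := fun _ => α) t x ⟨j, h⟩ = if hj : j < n then t ⟨j, hj⟩ else x := by
  simp [Fin.snoc]

lemma isLinked_snoc {n : ℕ} (t : Fin n → Label) (x : Label) :
    IsLinked (Fin.snoc t x : Fin (n + 1) → Label) ↔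
      IsLinked t ∧ ∀ h : 0 < n, (t ⟨n - 1, by omega⟩ = Label.a ↔ x = Label.c) := by
  simp only [IsLinked, Fin.snoc_mk]
  constructor
  · intro H
    refine ⟨fun j h => ?_, fun h => ?_⟩
    · simpa [h, show j < n by omega] using H j (by omega)
    · have := H (n - 1) (by omega)
      simpa [show n - 1 < n by omega, show ¬ n - 1 + 1 < n by omega] using this
  · rintro ⟨H, Hlast⟩ j h
    by_cases hj : j + 1 < n
    · simpa [hj, show j < n by omega] using H j hj
    · obtain rfl : j = n - 1 := by omega
      simpa [show n - 1 < n by omega, hj] using Hlast (by omega)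

lemma admissible_snoc_iff {n : ℕ} (t : Fin n → Label) (x : Label) :
    Admissible (Fin.snoc t x : Fin (n + 1) → Label) ↔
      x ≠ Label.a ∧ IsLinked t ∧ ∀ h : 0 < n, (t ⟨n - 1, by omega⟩ = Label.a ↔ x = Label.c) := by
  simp [admissible_iff, isLinked_snoc, Fin.snoc_mk]

lemma admissible_snoc_b {n : ℕ} (t : Fin n → Label) :
    Admissible (Fin.snoc t Label.b : Fin (n + 1) → Label) ↔ Admissible t := by
  rw [admissible_snoc_iff, admissible_iff]
  simp [and_comm]

lemma admissible_snoc_a_snoc_c {n : ℕ} (t : Fin n → Label) :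
    Admissible (Fin.snoc (Fin.snoc t Label.a : Fin (n + 1) → Label) Label.c : Fin (n + 2) → Label)
      ↔ Admissible t := by
  rw [admissible_snoc_iff, isLinked_snoc, admissible_iff]
  simp [Fin.snoc_mk, and_comm]

lemma eq_a_of_admissible_snoc_c {n : ℕ} {t : Fin n → Label} {x : Label}
    (h : Admissible (Fin.snoc (Fin.snoc t x : Fin (n + 1) → Label) Label.c : Fin (n + 2) → Label)) :
    x = Label.a := by
  rw [admissible_snoc_iff] at h
  simpa [Fin.snoc_mk] using h.2.2

lemma mem_admSet {n : ℕ} {t : Fin n → Label} : t ∈ AdmSet n ↔ Admissible t := by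
  classical
  simp [AdmSet]

lemma admSet_add_two (n : ℕ) :
    AdmSet (n + 2) = (AdmSet (n + 1)).image (Fin.snoc · Label.b) ∪
      (AdmSet n).image fun t =>
        (Fin.snoc (Fin.snoc t Label.a : Fin (n + 1) → Label) Label.c : Fin (n + 2) → Label) := by
  ext s
  simp only [Finset.mem_union, Finset.mem_image, mem_admSet]
  constructor
  · obtain ⟨u, x, rfl⟩ : ∃ u x, s = Fin.snoc u x := ⟨_, _, (Fin.snoc_init_self s).symm⟩
    intro hs
    cases x with
    | a => exact absurd rfl ((admissible_snoc_iff u _).1 hs).1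
    | b => exact .inl ⟨u, (admissible_snoc_b u).1 hs, rfl⟩
    | c =>
      obtain ⟨v, y, rfl⟩ : ∃ v y, u = Fin.snoc v y := ⟨_, _, (Fin.snoc_init_self u).symm⟩
      obtain rfl := eq_a_of_admissible_snoc_c hs
      exact .inr ⟨v, (admissible_snoc_a_snoc_c v).1 hs, rfl⟩
  · rintro (⟨t, ht, rfl⟩ | ⟨t, ht, rfl⟩)
    · exact (admissible_snoc_b t).2 ht
    · exact (admissible_snoc_a_snoc_c t).2 ht

lemma card_admSet_add_two (n : ℕ) :
    (AdmSet (n + 2)).card = (AdmSet (n + 1)).card + (AdmSet n).card := by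
  rw [admSet_add_two, Finset.card_union_of_disjoint,
    Finset.card_image_of_injective _ (Fin.snoc_left_injective _),
    Finset.card_image_of_injective _ fun _ _ h =>
      Fin.snoc_left_injective _ (Fin.snoc_left_injective _ h)]
  simp only [Finset.disjoint_left, Finset.mem_image]
  rintro _ ⟨t, -, rfl⟩ ⟨u, -, h⟩
  simpa using congrFun h (Fin.last _)

lemma card_admSet_zero : (AdmSet 0).card = 1 := by
  rw [Finset.eq_univ_of_forall fun t => mem_admSet.2 <| by simp [admissible_iff, IsLinked]]
  simp

lemma card_admSet_one : (AdmSet 1).card = 2 := by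
  have : AdmSet 1 = Finset.univ.filter fun t : Fin 1 → Label => t 0 ≠ Label.a := by
    ext t
    simp [mem_admSet, admissible_iff, IsLinked]
  rw [this]
  decide

lemma card_admSet : ∀ n : ℕ, (AdmSet n).card = Nat.fib (n + 2)
  | 0 => card_admSet_zero
  | 1 => card_admSet_one
  | n + 2 => by
    rw [card_admSet_add_two, card_admSet (n + 1), card_admSet n, Nat.fib_add_two (n := n + 2),
      add_comm]

theorem stmt1_general (N : ℕ) : (AdmSet (N - 1)).card = Nat.fib (N + 1) := by
  cases N with
  | zero => simpa using card_admSet_zero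
  | succ n => exact card_admSet n

/-- For every `N ≥ 2`, the set `𝒜_N` has exactly `F_{N+1}` elements, where `F` is the
Fibonacci sequence (`Nat.fib` satisfies `F_1 = F_2 = 1` and `F_{n+2} = F_{n+1} + F_n`). -/
theorem stmt1 (N : ℕ) (hN : 2 ≤ N) : (AdmSet (N - 1)).card = Nat.fib (N + 1) :=
  stmt1_general N
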